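/- Let s, b ∈ [0,1], K ≥ 1 an integer, p* = q* ∈ [0,1], and define k* = max(⌈K·p*⌉, 1), so that (k*-1)/K ≤ p* ≤ k*/K. Then the surrogate G̃_{k*} := max(b - (k*-1)/K, 0)·1[s ≤ k*/K] + max(k*/K - s, 0)·1[(k*-1)/K ≤ b] satisfies G̃_{k*} ≥ (b - s)·1[s ≤ p* ∧ q* ≤ b]. -/
import Mathlib


theorem stmt2 (s b : ℝ) (hs : s ∈ Set.Icc (0:ℝ) 1) (hb : b ∈ Set.Icc (0:ℝ) 1)
    (K : ℕ) (hK : 1 ≤ K) (p q : ℝ) (hpq : p = q) (hp : p ∈ Set.Icc (0:ℝ) 1)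
    (ks : ℤ) (hks : ks = max ⌈(K:ℝ) * p⌉ 1) :
    max (b - ((ks:ℝ)-1)/K) 0 * (if s ≤ (ks:ℝ)/K then (1:ℝ) else 0)
        + max ((ks:ℝ)/K - s) 0 * (if ((ks:ℝ)-1)/K ≤ b then (1:ℝ) else 0)
      ≥ (b - s) * (if s ≤ p ∧ q ≤ b then (1:ℝ) else 0) := by
  have hKpos : (0:ℝ) < K := by exact_mod_cast hK
  have h1 : p ≤ (ks:ℝ)/K := by
    rw [le_div_iff₀ hKpos]
    have : (K:ℝ) * p ≤ (⌈(K:ℝ) * p⌉ : ℝ) := Int.le_ceil _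
    have h2 : (⌈(K:ℝ) * p⌉ : ℝ) ≤ (ks:ℝ) := by
      exact_mod_cast hks ▸ le_max_left _ _
    linarith
  have h2 : ((ks:ℝ)-1)/K ≤ p := by
    rw [div_le_iff₀ hKpos]
    rcases le_or_gt ⌈(K:ℝ) * p⌉ 1 with h | h
    · have : ks = 1 := by omega
      have hp0 := hp.1
      rw [this]; push_cast; nlinarith
    · have hk : ks = ⌈(K:ℝ) * p⌉ := by omega
      have := Int.ceil_lt_add_one ((K:ℝ) * p)
      rw [hk]
      have : ((⌈(K:ℝ)*p⌉:ℝ)) < (K:ℝ)*p + 1 := Int.ceil_lt_add_one _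
      linarith [mul_comm (K:ℝ) p]
  by_cases h : s ≤ p ∧ q ≤ b
  · obtain ⟨hsp, hqb⟩ := h
    rw [← hpq] at hqb
    have hsk : s ≤ (ks:ℝ)/K := le_trans hsp h1
    have hbk : ((ks:ℝ)-1)/K ≤ b := le_trans h2 hqb
    rw [if_pos hsk, if_pos hbk, if_pos ⟨hsp, hpq ▸ hqb⟩]
    have e1 : b - ((ks:ℝ)-1)/K ≤ max (b - ((ks:ℝ)-1)/K) 0 := le_max_left _ _
    have e2 : (ks:ℝ)/K - s ≤ max ((ks:ℝ)/K - s) 0 := le_max_left _ _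
    nlinarith [h1, h2]
  · rw [if_neg h]
    have := le_max_right (b - ((ks:ℝ)-1)/K) 0
    have := le_max_right ((ks:ℝ)/K - s) 0
    have i1 : (0:ℝ) ≤ if s ≤ (ks:ℝ)/K then (1:ℝ) else 0 := by positivity
    have i2 : (0:ℝ) ≤ if ((ks:ℝ)-1)/K ≤ b then (1:ℝ) else 0 := by positivity
    nlinarith [mul_nonneg (le_max_right (b - ((ks:ℝ)-1)/K) 0) i1,
      mul_nonneg (le_max_right ((ks:ℝ)/K - s) 0) i2]
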